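/- Let A be an abelian category and let (L, F) be an object of the homotopy category of finitely filtered cochain complexes in A. Define the shifted filtration Dec(F). Then the assignment (L,F) ↦ (L, Dec(F)) is functorial and sends filtered quasi-isomorphisms to filtered quasi-isomorphisms; more precisely, if φ : (L,F) → (M,F) induces isomorphisms on all E_1-terms E_1^{p,q} = H^{p+q}(Gr^p_F), then φ induces isomorphisms on all H^r(Gr^p_{Dec(F)}). -/

import Mathlib

set_option linter.unusedVariables false


/-! Basic theory of cochain complexes of abelian groups, indexed by `ℤ`,
with subcomplexes, quotient complexes, cohomology and induced maps. -/

/-- A cochain complex of abelian groups indexed by `ℤ`. -/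
structure Cochain : Type 1 where
  X : ℤ → Type
  inst : ∀ l, AddCommGroup (X l)
  d : ∀ l, X l →+ X (l + 1)
  dd : ∀ l (x : X l), d (l + 1) (d l x) = 0

attribute [instance] Cochain.inst

namespace Cochain

variable (L M : Cochain)

/-- Transport along an equality of degrees. -/
def castAdd {a b : ℤ} (h : a = b) : L.X a ≃+ L.X b := by
  subst h; exact AddEquiv.refl _

@[simp] theorem castAdd_rfl {a : ℤ} (x : L.X a) : L.castAdd rfl x = x := rfl

/-- Cocycles in degree `l`. -/
def cocycles (l : ℤ) : AddSubgroup (L.X l) := (L.d l).ker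

/-- Coboundaries in degree `l`. -/
def bdry (l : ℤ) : AddSubgroup (L.X l) :=
  ((L.castAdd (show l - 1 + 1 = l by ring)).toAddMonoidHom.comp (L.d (l - 1))).range

/-- Cohomology in degree `l`: cocycles modulo coboundaries. -/
abbrev H (l : ℤ) : Type := ↥(L.cocycles l) ⧸ (L.bdry l).addSubgroupOf (L.cocycles l)

/-- The projection from cocycles onto cohomology. -/
abbrev Hmk (l : ℤ) : ↥(L.cocycles l) →+ L.H l := QuotientAddGroup.mk' _

/-- A morphism of cochain complexes. -/
structure Hom (L M : Cochain) where
  f : ∀ l, L.X l →+ M.X l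
  comm : ∀ l (x : L.X l), f (l + 1) (L.d l x) = M.d l (f l x)

variable {L M}

theorem Hom.cast_natural (φ : Hom L M) {a b : ℤ} (h : a = b) (x : L.X a) :
    φ.f b (L.castAdd h x) = M.castAdd h (φ.f a x) := by subst h; rfl

theorem mem_bdry_map (φ : Hom L M) (l : ℤ) {x : L.X l} (hx : x ∈ L.bdry l) :
    φ.f l x ∈ M.bdry l := by
  obtain ⟨y, hy⟩ := hx
  refine ⟨φ.f (l - 1) y, ?_⟩
  simp only [AddMonoidHom.comp_apply, AddEquiv.coe_toAddMonoidHom] at hy ⊢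
  rw [← hy, φ.cast_natural, φ.comm]

/-- The map induced on cocycles by a morphism of complexes. -/
def Hom.cocyclesMap (φ : Hom L M) (l : ℤ) : ↥(L.cocycles l) →+ ↥(M.cocycles l) :=
  AddMonoidHom.codRestrict ((φ.f l).domRestrict (L.cocycles l)) (M.cocycles l) (fun x => by
    have hx : L.d l x.1 = 0 := x.2
    show M.d l (φ.f l x.1) = 0
    rw [← φ.comm l x.1, hx, map_zero])

/-- The map induced on cohomology by a morphism of complexes. -/
def Hom.Hmap (φ : Hom L M) (l : ℤ) : L.H l →+ M.H l :=
  QuotientAddGroup.lift _ ((M.Hmk l).comp (φ.cocyclesMap l)) (fun x hx => by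
    have hx' : (x : L.X l) ∈ L.bdry l := AddSubgroup.mem_addSubgroupOf.mp hx
    have : (φ.cocyclesMap l x : M.X l) ∈ M.bdry l := mem_bdry_map φ l hx'
    simpa using (QuotientAddGroup.eq_zero_iff _).2 (AddSubgroup.mem_addSubgroupOf.mpr this))

variable (L)

/-- A family of subgroups is a subcomplex if it is stable under the differential. -/
def IsSubcomplex (S : ∀ l, AddSubgroup (L.X l)) : Prop :=
  ∀ l, ∀ x ∈ S l, L.d l x ∈ S (l + 1)

/-- The subcomplex determined by a `d`-stable family of subgroups. -/
def sub (S : ∀ l, AddSubgroup (L.X l)) (hS : L.IsSubcomplex S) : Cochain where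
  X l := S l
  inst l := inferInstance
  d l := AddMonoidHom.codRestrict ((L.d l).domRestrict (S l)) (S (l + 1))
    (fun x => hS l x.1 x.2)
  dd l x := Subtype.ext (L.dd l x.1)

/-- The inclusion of a subcomplex. -/
def subIncl (S : ∀ l, AddSubgroup (L.X l)) (hS : L.IsSubcomplex S) :
    Hom (L.sub S hS) L where
  f l := (S l).subtype
  comm _ _ := rfl

/-- The quotient complex by a subcomplex. -/
def quot (S : ∀ l, AddSubgroup (L.X l)) (hS : L.IsSubcomplex S) : Cochain where
  X l := L.X l ⧸ S l
  inst l := inferInstance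
  d l := QuotientAddGroup.lift (S l) ((QuotientAddGroup.mk' (S (l + 1))).comp (L.d l))
    (fun x hx => by simpa using (QuotientAddGroup.eq_zero_iff _).2 (hS l x hx))
  dd l x := QuotientAddGroup.induction_on x (fun y => by
    simp only [QuotientAddGroup.lift_mk, AddMonoidHom.comp_apply,
      QuotientAddGroup.mk'_apply, QuotientAddGroup.lift_mk, L.dd]
    rfl)

/-- The projection onto a quotient complex. -/
def quotHom (S : ∀ l, AddSubgroup (L.X l)) (hS : L.IsSubcomplex S) :
    Hom L (L.quot S hS) where
  f l := QuotientAddGroup.mk' (S l)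
  comm l x := by
    simp only [quot, QuotientAddGroup.mk'_apply, QuotientAddGroup.lift_mk,
      AddMonoidHom.comp_apply]
    rfl

/-- The filtration induced on cohomology by a subcomplex: the image of
`H^l(S) → H^l(L)`. -/
def imageInH (S : ∀ l, AddSubgroup (L.X l)) (hS : L.IsSubcomplex S) (l : ℤ) :
    AddSubgroup (L.H l) :=
  ((L.subIncl S hS).Hmap l).range

variable {L}

/-- Restriction of a morphism of complexes to subcomplexes. -/
def Hom.restrictHom (φ : Hom L M) (S : ∀ l, AddSubgroup (L.X l))
    (T : ∀ l, AddSubgroup (M.X l)) (hS : L.IsSubcomplex S) (hT : M.IsSubcomplex T)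
    (h : ∀ l, ∀ x ∈ S l, φ.f l x ∈ T l) :
    Hom (L.sub S hS) (M.sub T hT) where
  f l := AddMonoidHom.codRestrict ((φ.f l).domRestrict (S l)) (T l) (fun x => h l x.1 x.2)
  comm l x := Subtype.ext (φ.comm l x.1)

/-- Descent of a morphism of complexes to quotient complexes. -/
def Hom.descendHom (φ : Hom L M) (S : ∀ l, AddSubgroup (L.X l))
    (T : ∀ l, AddSubgroup (M.X l)) (hS : L.IsSubcomplex S) (hT : M.IsSubcomplex T)
    (h : ∀ l, ∀ x ∈ S l, φ.f l x ∈ T l) :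
    Hom (L.quot S hS) (M.quot T hT) where
  f l := QuotientAddGroup.map (S l) (T l) (φ.f l) (fun x hx => h l x hx)
  comm l x := QuotientAddGroup.induction_on x (fun y => by
    simp only [quot, QuotientAddGroup.lift_mk, QuotientAddGroup.map_mk,
      QuotientAddGroup.mk'_apply, AddMonoidHom.comp_apply, φ.comm]
    exact congrArg (QuotientAddGroup.mk' (T (l + 1))) (φ.comm l y))

end Cochain
namespace Cochain

variable (L M : Cochain)

theorem IsSubcomplex.inf {L : Cochain} {S T : ∀ l, AddSubgroup (L.X l)}
    (hS : L.IsSubcomplex S) (hT : L.IsSubcomplex T) :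
    L.IsSubcomplex (fun l => S l ⊓ T l) := fun l x hx =>
  AddSubgroup.mem_inf.2 ⟨hS l x (AddSubgroup.mem_inf.1 hx).1, hT l x (AddSubgroup.mem_inf.1 hx).2⟩

theorem IsSubcomplex.sup {L : Cochain} {S T : ∀ l, AddSubgroup (L.X l)}
    (hS : L.IsSubcomplex S) (hT : L.IsSubcomplex T) :
    L.IsSubcomplex (fun l => S l ⊔ T l) := by
  intro l x hx
  rw [AddSubgroup.mem_sup] at hx ⊢
  obtain ⟨y, hy, z, hz, rfl⟩ := hx
  exact ⟨L.d l y, hS l y hy, L.d l z, hT l z hz, (map_add _ _ _).symm⟩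

theorem ker_isSubcomplex {L M : Cochain} (φ : Hom L M) :
    L.IsSubcomplex (fun l => (φ.f l).ker) := by
  intro l x hx
  rw [AddMonoidHom.mem_ker] at hx ⊢
  rw [φ.comm l x, hx, map_zero]

/-- The graded piece `S/T` of two nested subcomplexes, as a cochain complex. -/
def GrCochain (L : Cochain) (S T : ∀ l, AddSubgroup (L.X l)) (hS : L.IsSubcomplex S)
    (hT : L.IsSubcomplex T) (_hle : ∀ l, T l ≤ S l) : Cochain :=
  (L.sub S hS).quot (fun l => (T l).addSubgroupOf (S l)) (fun l x hx =>
    AddSubgroup.mem_addSubgroupOf.2 (hT l x.1 (AddSubgroup.mem_addSubgroupOf.1 hx)))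

/-- The morphism induced on graded pieces by a filtered morphism of complexes. -/
def Hom.grHom {L M : Cochain} (φ : Hom L M) (S T : ∀ l, AddSubgroup (L.X l))
    (S' T' : ∀ l, AddSubgroup (M.X l)) (hS : L.IsSubcomplex S) (hT : L.IsSubcomplex T)
    (hS' : M.IsSubcomplex S') (hT' : M.IsSubcomplex T')
    (hle : ∀ l, T l ≤ S l) (hle' : ∀ l, T' l ≤ S' l)
    (h1 : ∀ l, ∀ x ∈ S l, φ.f l x ∈ S' l) (h2 : ∀ l, ∀ x ∈ T l, φ.f l x ∈ T' l) :
    Hom (GrCochain L S T hS hT hle) (GrCochain M S' T' hS' hT' hle') :=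
  (φ.restrictHom S S' hS hS' h1).descendHom _ _ _ _
    (fun l x hx => AddSubgroup.mem_addSubgroupOf.2
      (h2 l x.1 (AddSubgroup.mem_addSubgroupOf.1 hx)))

/-- The shifted (décalée) filtration `Dec(F)`:
`Dec(F)^p L^l = { x ∈ F^{p+l} L^l : d x ∈ F^{p+l+1} L^{l+1} }`. -/
def decF (L : Cochain) (F : ℤ → ∀ l, AddSubgroup (L.X l)) (p l : ℤ) :
    AddSubgroup (L.X l) :=
  F (p + l) l ⊓ (F (p + l + 1) (l + 1)).comap (L.d l)

theorem decF_isSubcomplex (L : Cochain) (F : ℤ → ∀ l, AddSubgroup (L.X l)) (p : ℤ) :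
    L.IsSubcomplex (fun l => decF L F p l) := by
  intro l x hx
  simp only [decF, AddSubgroup.mem_inf, AddSubgroup.mem_comap] at hx ⊢
  refine ⟨?_, ?_⟩
  · have h : p + (l + 1) = p + l + 1 := by ring
    rw [h]
    exact hx.2
  · rw [L.dd]
    exact zero_mem _

theorem decF_mono (L : Cochain) (F : ℤ → ∀ l, AddSubgroup (L.X l))
    (hdec : ∀ p l, F (p + 1) l ≤ F p l) (p l : ℤ) :
    decF L F (p + 1) l ≤ decF L F p l := by
  intro x hx
  simp only [decF, AddSubgroup.mem_inf, AddSubgroup.mem_comap] at hx ⊢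
  have e1 : p + 1 + l = p + l + 1 := by ring
  rw [e1] at hx
  exact ⟨hdec (p + l) l hx.1, hdec (p + l + 1) (l + 1) hx.2⟩

/-- The iterated graded piece `Gr^a_F Gr^b_G L`, as a cochain complex:
`(F^a ∩ G^b) / (F^{a+1} ∩ G^b + F^a ∩ G^{b+1})`. -/
def GrGrCochain (L : Cochain) (F G : ℤ → ∀ l, AddSubgroup (L.X l))
    (hFsub : ∀ p, L.IsSubcomplex (F p)) (hGsub : ∀ p, L.IsSubcomplex (G p))
    (hFdec : ∀ p l, F (p + 1) l ≤ F p l) (hGdec : ∀ p l, G (p + 1) l ≤ G p l)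
    (a b : ℤ) : Cochain :=
  GrCochain L (fun l => F a l ⊓ G b l)
    (fun l => (F (a + 1) l ⊓ G b l) ⊔ (F a l ⊓ G (b + 1) l))
    (IsSubcomplex.inf (hFsub a) (hGsub b))
    (IsSubcomplex.sup (IsSubcomplex.inf (hFsub (a + 1)) (hGsub b))
      (IsSubcomplex.inf (hFsub a) (hGsub (b + 1))))
    (fun l => sup_le (inf_le_inf_right _ (hFdec a l)) (inf_le_inf_left _ (hGdec b l)))

end Cochain

open Cochain in
theorem decF_compat {L M : Cochain} (φ : Cochain.Hom L M)
    (F : ℤ → ∀ l, AddSubgroup (L.X l)) (F' : ℤ → ∀ l, AddSubgroup (M.X l))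
    (hc : ∀ p l, ∀ x ∈ F p l, φ.f l x ∈ F' p l) (p : ℤ) :
    ∀ l, ∀ x ∈ decF L F p l, φ.f l x ∈ decF M F' p l := by
  intro l x hx
  simp only [decF, AddSubgroup.mem_inf, AddSubgroup.mem_comap] at hx ⊢
  refine ⟨hc _ _ _ hx.1, ?_⟩
  rw [← φ.comm]
  exact hc _ _ _ hx.2

/-!
Writing `q = p + r`, a class in `H^r(Gr^p_{Dec F} L)` is represented by `x ∈ F^q L^r` with
`dx ∈ F^{q+2}`, and such an `x` represents zero iff `x ∈ d u + F^{q+1}` for some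
`u ∈ F^{q-1}` with `du ∈ F^q`. This is the `E_2`-term: the cohomology of `d_1` at
`E_1^{q,r-q}`. A map that is bijective on all `E_1`-terms is therefore bijective on these
`E_2`-terms, by diagram chases that use injectivity and surjectivity on `E_1` in
neighbouring filtration degrees.
-/

theorem AddMonoidHom.injective_iff_of_comm {A A' H H' : Type*} [AddGroup H] [AddGroup H']
    (g : H →+ H') {π : A → H} {π' : A' → H'} {f : A → A'} (hπ : Function.Surjective π)
    (hcomm : ∀ a, g (π a) = π' (f a)) :
    Function.Injective g ↔ ∀ a, π' (f a) = 0 → π a = 0 := by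
  rw [injective_iff_map_eq_zero]
  constructor
  · intro hg a ha
    exact hg _ ((hcomm a).trans ha)
  · intro h c hc
    obtain ⟨a, rfl⟩ := hπ c
    exact h a ((hcomm a).symm.trans hc)

theorem Function.surjective_iff_of_comm {A A' H H' : Type*} (g : H → H') {π : A → H}
    {π' : A' → H'} {f : A → A'} (hπ : Function.Surjective π) (hπ' : Function.Surjective π')
    (hcomm : ∀ a, g (π a) = π' (f a)) :
    Function.Surjective g ↔ ∀ a', ∃ a, π' (f a) = π' a' := by
  constructor
  · intro hg a'
    obtain ⟨c, hc⟩ := hg (π' a')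
    obtain ⟨a, rfl⟩ := hπ c
    exact ⟨a, (hcomm a).symm.trans hc⟩
  · intro h c'
    obtain ⟨a', rfl⟩ := hπ' c'
    obtain ⟨a, ha⟩ := h a'
    exact ⟨π a, (hcomm a).trans ha⟩

namespace Cochain

variable {L M : Cochain}

theorem castAdd_mem {S : ∀ l, AddSubgroup (L.X l)} {a b : ℤ} (h : a = b) {x : L.X a} :
    L.castAdd h x ∈ S b ↔ x ∈ S a := by
  subst h; rfl

theorem castAdd_castAdd {a b c : ℤ} (h : a = b) (h' : b = c) (x : L.X a) :
    L.castAdd h' (L.castAdd h x) = L.castAdd (h.trans h') x := by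
  subst h h'; rfl

theorem d_castAdd {a b : ℤ} (h : a = b) (x : L.X a) :
    L.d b (L.castAdd h x) = L.castAdd (congrArg (· + 1) h) (L.d a x) := by
  subst h; rfl

variable (L) in
def dFrom (l : ℤ) : L.X (l - 1) →+ L.X l :=
  (L.castAdd (sub_add_cancel l 1)).toAddMonoidHom.comp (L.d (l - 1))

theorem dFrom_apply (l : ℤ) (x : L.X (l - 1)) :
    L.dFrom l x = L.castAdd (sub_add_cancel l 1) (L.d (l - 1) x) := rfl

theorem d_dFrom (l : ℤ) (x : L.X (l - 1)) : L.d l (L.dFrom l x) = 0 := by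
  rw [dFrom_apply, d_castAdd, L.dd, map_zero]

theorem dFrom_dFrom (l : ℤ) (x : L.X (l - 1 - 1)) : L.dFrom l (L.dFrom (l - 1) x) = 0 := by
  rw [dFrom_apply, d_dFrom, map_zero]

theorem dFrom_add_one (l : ℤ) (x : L.X (l + 1 - 1)) :
    L.dFrom (l + 1) x = L.d l (L.castAdd (add_sub_cancel_right l 1) x) := by
  rw [d_castAdd]; rfl

theorem dFrom_mem {S : ∀ l, AddSubgroup (L.X l)} (hS : L.IsSubcomplex S) {l : ℤ}
    {x : L.X (l - 1)} (hx : x ∈ S (l - 1)) : L.dFrom l x ∈ S l :=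
  (castAdd_mem _).2 (hS _ x hx)

theorem Hom.f_dFrom (φ : Hom L M) (l : ℤ) (x : L.X (l - 1)) :
    φ.f l (L.dFrom l x) = M.dFrom l (φ.f (l - 1) x) := by
  rw [dFrom_apply, dFrom_apply, φ.cast_natural, φ.comm]

section Relative

variable (L) in
def relCocycles (S T : ∀ l, AddSubgroup (L.X l)) (l : ℤ) : AddSubgroup (L.X l) :=
  S l ⊓ (T (l + 1)).comap (L.d l)

variable (L) in
def relBoundaries (S T : ∀ l, AddSubgroup (L.X l)) (l : ℤ) : AddSubgroup (L.X l) :=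
  (S (l - 1)).map (L.dFrom l) ⊔ T l

variable {S T : ∀ l, AddSubgroup (L.X l)}

theorem mem_relBoundaries_add_one_iff {l : ℤ} {x : L.X (l + 1)} :
    x ∈ L.relBoundaries S T (l + 1) ↔ ∃ u ∈ S l, x - L.d l u ∈ T (l + 1) := by
  simp only [relBoundaries, AddSubgroup.mem_sup, AddSubgroup.mem_map]
  constructor
  · rintro ⟨_, ⟨u, hu, rfl⟩, t, ht, rfl⟩
    refine ⟨L.castAdd (add_sub_cancel_right l 1) u, (castAdd_mem _).2 hu, ?_⟩
    rwa [dFrom_add_one, add_sub_cancel_left]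
  · rintro ⟨u, hu, hxu⟩
    refine ⟨_, ⟨L.castAdd (add_sub_cancel_right l 1).symm u, (castAdd_mem _).2 hu, rfl⟩,
      _, hxu, ?_⟩
    rw [dFrom_add_one, castAdd_castAdd, castAdd_rfl, add_sub_cancel]

theorem exists_dFrom_eq_of_mem_relBoundaries {l : ℤ} {y : L.X (l - 1)}
    (hy : y ∈ L.relBoundaries S T (l - 1)) : ∃ t ∈ T (l - 1), L.dFrom l y = L.dFrom l t := by
  obtain ⟨_, ⟨w, -, rfl⟩, t, ht, rfl⟩ := AddSubgroup.mem_sup.1 hy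
  exact ⟨t, ht, by rw [map_add, dFrom_dFrom, zero_add]⟩

end Relative

section GrCohomology

variable (S T : ∀ l, AddSubgroup (L.X l)) (hS : L.IsSubcomplex S) (hT : L.IsSubcomplex T)
  (hle : ∀ l, T l ≤ S l)

def grMk (l : ℤ) : S l →+ (GrCochain L S T hS hT hle).X l :=
  QuotientAddGroup.mk' ((T l).addSubgroupOf (S l))

theorem grMk_surjective (l : ℤ) : Function.Surjective (grMk S T hS hT hle l) :=
  QuotientAddGroup.mk'_surjective _

theorem grMk_eq_zero_iff {l : ℤ} (x : S l) :
    grMk S T hS hT hle l x = 0 ↔ (x : L.X l) ∈ T l :=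
  (QuotientAddGroup.eq_zero_iff x).trans AddSubgroup.mem_addSubgroupOf

theorem grMk_eq_grMk_iff {l : ℤ} (x y : S l) :
    grMk S T hS hT hle l x = grMk S T hS hT hle l y ↔ (x : L.X l) - y ∈ T l := by
  rw [← sub_eq_zero, ← map_sub, grMk_eq_zero_iff, AddSubgroup.coe_sub]

theorem castAdd_grMk {a b : ℤ} (h : a = b) (x : S a) :
    (GrCochain L S T hS hT hle).castAdd h (grMk S T hS hT hle a x) =
      grMk S T hS hT hle b ⟨L.castAdd h x, (castAdd_mem h).2 x.2⟩ := by
  subst h; rfl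

theorem dFrom_grMk {l : ℤ} (x : S (l - 1)) :
    (GrCochain L S T hS hT hle).dFrom l (grMk S T hS hT hle (l - 1) x) =
      grMk S T hS hT hle l ⟨L.dFrom l x, dFrom_mem hS x.2⟩ :=
  castAdd_grMk S T hS hT hle _ ⟨L.d (l - 1) x, hS (l - 1) x x.2⟩

def grClass (l : ℤ) : L.relCocycles S T l →+ (GrCochain L S T hS hT hle).H l :=
  ((GrCochain L S T hS hT hle).Hmk l).comp <| AddMonoidHom.codRestrict
    ((grMk S T hS hT hle l).comp (AddSubgroup.inclusion inf_le_left)) _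
    fun x => AddMonoidHom.mem_ker.2 ((grMk_eq_zero_iff S T hS hT hle _).2 x.2.2)

theorem grClass_surjective (l : ℤ) : Function.Surjective (grClass S T hS hT hle l) := by
  intro c
  induction c using QuotientAddGroup.induction_on with | H z => ?_
  obtain ⟨w, hw⟩ := z
  obtain ⟨x, rfl⟩ := grMk_surjective S T hS hT hle l w
  have hdx := (grMk_eq_zero_iff S T hS hT hle _).1 (AddMonoidHom.mem_ker.1 hw)
  exact ⟨⟨x, AddSubgroup.mem_inf.2 ⟨x.2, hdx⟩⟩, rfl⟩

theorem grClass_eq_zero_iff {l : ℤ} (x : L.relCocycles S T l) :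
    grClass S T hS hT hle l x = 0 ↔ (x : L.X l) ∈ L.relBoundaries S T l := by
  change (QuotientAddGroup.mk _ : (GrCochain L S T hS hT hle).H l) = 0 ↔ _
  rw [QuotientAddGroup.eq_zero_iff, AddSubgroup.mem_addSubgroupOf]
  change grMk S T hS hT hle l ⟨x, x.2.1⟩ ∈ ((GrCochain L S T hS hT hle).dFrom l).range ↔ _
  constructor
  · rintro ⟨w, hw⟩
    obtain ⟨u, rfl⟩ := grMk_surjective S T hS hT hle (l - 1) w
    rw [dFrom_grMk, eq_comm, grMk_eq_grMk_iff] at hw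
    exact AddSubgroup.mem_sup.2 ⟨_, AddSubgroup.mem_map_of_mem _ u.2, _, hw, add_sub_cancel _ _⟩
  · intro hx
    obtain ⟨_, ⟨u, hu, rfl⟩, t, ht, hut⟩ := AddSubgroup.mem_sup.1 hx
    refine ⟨grMk S T hS hT hle (l - 1) ⟨u, hu⟩, ?_⟩
    rw [dFrom_grMk, eq_comm, grMk_eq_grMk_iff]
    rwa [← hut, add_sub_cancel_left]

theorem grClass_eq_grClass_iff {l : ℤ} (x y : L.relCocycles S T l) :
    grClass S T hS hT hle l x = grClass S T hS hT hle l y ↔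
      (x : L.X l) - y ∈ L.relBoundaries S T l := by
  rw [← sub_eq_zero, ← map_sub, grClass_eq_zero_iff, AddSubgroup.coe_sub]

end GrCohomology

section GrHom

variable (φ : Hom L M) (S T : ∀ l, AddSubgroup (L.X l)) (S' T' : ∀ l, AddSubgroup (M.X l))

def Hom.GrInjective (l : ℤ) : Prop :=
  ∀ x ∈ L.relCocycles S T l,
    φ.f l x ∈ M.relBoundaries S' T' l → x ∈ L.relBoundaries S T l

def Hom.GrSurjective (l : ℤ) : Prop :=
  ∀ y ∈ M.relCocycles S' T' l,
    ∃ x ∈ L.relCocycles S T l, φ.f l x - y ∈ M.relBoundaries S' T' l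

variable {S T S' T'}

theorem Hom.map_mem_relCocycles (h1 : ∀ l, ∀ x ∈ S l, φ.f l x ∈ S' l)
    (h2 : ∀ l, ∀ x ∈ T l, φ.f l x ∈ T' l) {l : ℤ} {x : L.X l}
    (hx : x ∈ L.relCocycles S T l) :
    φ.f l x ∈ M.relCocycles S' T' l := by
  obtain ⟨hxS, hdx⟩ := AddSubgroup.mem_inf.1 hx
  refine AddSubgroup.mem_inf.2 ⟨h1 l x hxS, ?_⟩
  rw [AddSubgroup.mem_comap, ← φ.comm]
  exact h2 _ _ hdx

variable (hS : L.IsSubcomplex S) (hT : L.IsSubcomplex T)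
  (hS' : M.IsSubcomplex S') (hT' : M.IsSubcomplex T')
  (hle : ∀ l, T l ≤ S l) (hle' : ∀ l, T' l ≤ S' l)
  (h1 : ∀ l, ∀ x ∈ S l, φ.f l x ∈ S' l) (h2 : ∀ l, ∀ x ∈ T l, φ.f l x ∈ T' l)

theorem Hom.Hmap_grHom_grClass {l : ℤ} (x : L.relCocycles S T l) :
    (φ.grHom S T S' T' hS hT hS' hT' hle hle' h1 h2).Hmap l (grClass S T hS hT hle l x) =
      grClass S' T' hS' hT' hle' l ⟨φ.f l x, φ.map_mem_relCocycles h1 h2 x.2⟩ := rfl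

theorem Hom.injective_Hmap_grHom_iff (l : ℤ) :
    Function.Injective ((φ.grHom S T S' T' hS hT hS' hT' hle hle' h1 h2).Hmap l) ↔
      φ.GrInjective S T S' T' l := by
  rw [AddMonoidHom.injective_iff_of_comm _ (grClass_surjective S T hS hT hle l)
    (φ.Hmap_grHom_grClass hS hT hS' hT' hle hle' h1 h2)]
  simp only [grClass_eq_zero_iff, Subtype.forall]
  rfl

theorem Hom.surjective_Hmap_grHom_iff (l : ℤ) :
    Function.Surjective ((φ.grHom S T S' T' hS hT hS' hT' hle hle' h1 h2).Hmap l) ↔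
      φ.GrSurjective S T S' T' l := by
  rw [Function.surjective_iff_of_comm _ (grClass_surjective S T hS hT hle l)
    (grClass_surjective S' T' hS' hT' hle' l)
    (φ.Hmap_grHom_grClass hS hT hS' hT' hle hle' h1 h2)]
  simp only [grClass_eq_grClass_iff, Subtype.forall, Subtype.exists, exists_prop]
  rfl

end GrHom

section Decalage

variable {F : ℤ → ∀ l, AddSubgroup (L.X l)} {F' : ℤ → ∀ l, AddSubgroup (M.X l)}

theorem mem_decF_of_le (hF : ∀ l, Antitone fun p => F p l) {p l a b : ℤ} {x : L.X l}
    (hx : x ∈ F a l) (hdx : L.d l x ∈ F b (l + 1)) (ha : p + l ≤ a) (hb : p + l + 1 ≤ b) :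
    x ∈ L.decF F p l :=
  AddSubgroup.mem_inf.2 ⟨hF l ha hx, hF (l + 1) hb hdx⟩

-- In both chases, `L.decF F p l` is by definition `L.relCocycles (F (p + l)) (F (p + l + 1)) l`,
-- which is what lets the `E_1` hypotheses be applied to elements of `Dec(F)`.
theorem Hom.grInjective_decF (φ : Hom L M) (hF : ∀ l, Antitone fun p => F p l)
    (hF' : ∀ l, Antitone fun p => F' p l) (hsub : ∀ p, L.IsSubcomplex (F p))
    (hinj : ∀ q n, φ.GrInjective (F q) (F (q + 1)) (F' q) (F' (q + 1)) n)
    (hsurj : ∀ q n, φ.GrSurjective (F q) (F (q + 1)) (F' q) (F' (q + 1)) n) (p r : ℤ) :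
    φ.GrInjective (L.decF F p) (L.decF F (p + 1)) (M.decF F' p) (M.decF F' (p + 1)) r := by
  intro x hx hφx
  obtain ⟨hxDec, hdxDec⟩ := AddSubgroup.mem_inf.1 hx
  have hdx : L.d r x ∈ F (p + r + 2) (r + 1) := hF _ (by omega) (AddSubgroup.mem_inf.1 hdxDec).1
  obtain ⟨_, ⟨v, hv, rfl⟩, z, hz, hvz⟩ := AddSubgroup.mem_sup.1 hφx
  obtain ⟨a, ha, hav⟩ := hsurj (p + (r - 1)) (r - 1) v hv
  obtain ⟨t, ht, hdt⟩ := exists_dFrom_eq_of_mem_relBoundaries hav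
  have hφx' : φ.f r (x - L.dFrom r a) = z - M.dFrom r t := by
    rw [map_sub, φ.f_dFrom, ← hvz, ← hdt, map_sub]
    abel
  have hx' : x - L.dFrom r a ∈ L.relBoundaries (F (p + r)) (F (p + r + 1)) r := by
    refine hinj _ _ _ (sub_mem hxDec (dFrom_mem (decF_isSubcomplex L F p) ha)) ?_
    rw [hφx']
    exact sub_mem (AddSubgroup.mem_sup_right (hF' r (by omega) (AddSubgroup.mem_inf.1 hz).1))
      (AddSubgroup.mem_sup_left (AddSubgroup.mem_map_of_mem _ (hF' _ (by omega) ht)))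
  obtain ⟨_, ⟨b, hb, rfl⟩, s, hs, hbs⟩ := AddSubgroup.mem_sup.1 hx'
  have hds : L.d r s = L.d r x := by
    rw [eq_sub_of_add_eq' hbs, map_sub, map_sub, d_dFrom, d_dFrom, sub_zero, sub_zero]
  refine AddSubgroup.mem_sup.2 ⟨L.dFrom r (a + b), AddSubgroup.mem_map_of_mem _ ?_, s, ?_, ?_⟩
  · exact add_mem ha (mem_decF_of_le hF hb (hsub _ _ b hb) (by omega) (by omega))
  · exact mem_decF_of_le hF hs (hds ▸ hdx) (by omega) (by omega)
  · rw [map_add, add_assoc, hbs, add_sub_cancel]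

theorem Hom.grSurjective_decF (φ : Hom L M) (hF : ∀ l, Antitone fun p => F p l)
    (hF' : ∀ l, Antitone fun p => F' p l) (hsub' : ∀ p, M.IsSubcomplex (F' p))
    (hc : ∀ p l, ∀ x ∈ F p l, φ.f l x ∈ F' p l)
    (hinj : ∀ q n, φ.GrInjective (F q) (F (q + 1)) (F' q) (F' (q + 1)) n)
    (hsurj : ∀ q n, φ.GrSurjective (F q) (F (q + 1)) (F' q) (F' (q + 1)) n) (p r : ℤ) :
    φ.GrSurjective (L.decF F p) (L.decF F (p + 1)) (M.decF F' p) (M.decF F' (p + 1)) r := by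
  intro y hy
  obtain ⟨hyDec, hdyDec⟩ := AddSubgroup.mem_inf.1 hy
  have hdy : M.d r y ∈ F' (p + r + 2) (r + 1) :=
    hF' _ (by omega) (AddSubgroup.mem_inf.1 hdyDec).1
  obtain ⟨x₀, hx₀, hx₀y⟩ := hsurj (p + r) r y hyDec
  obtain ⟨_, ⟨u, hu, rfl⟩, t, ht, hut⟩ := AddSubgroup.mem_sup.1 hx₀y
  have hdx₀ : L.d r x₀ ∈ L.relCocycles (F (p + r + 1)) (F (p + r + 1 + 1)) (r + 1) :=
    AddSubgroup.mem_inf.2 ⟨(AddSubgroup.mem_inf.1 hx₀).2, by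
      rw [AddSubgroup.mem_comap, L.dd]; exact zero_mem _⟩
  have hφdx₀ : φ.f (r + 1) (L.d r x₀) - M.d r t = M.d r y := by
    rw [φ.comm, eq_add_of_sub_eq hut.symm, map_add, map_add, d_dFrom]
    abel
  obtain ⟨c, hcF, hdc⟩ := mem_relBoundaries_add_one_iff.1 <| hinj _ _ _ hdx₀ <|
    mem_relBoundaries_add_one_iff.2 ⟨t, ht, hφdx₀ ▸ hF' _ (by omega) hdy⟩
  have hdx : L.d r (x₀ - c) ∈ F (p + r + 2) (r + 1) := by
    rw [map_sub]; exact hF _ (by omega) hdc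
  have hdt : M.d r (t - φ.f r c) = φ.f (r + 1) (L.d r (x₀ - c)) - M.d r y := by
    rw [eq_sub_of_add_eq' hut, map_sub, map_sub, map_sub, d_dFrom, ← φ.comm, ← φ.comm,
      map_sub, map_sub]
    abel
  refine ⟨x₀ - c, AddSubgroup.mem_inf.2 ⟨?_, ?_⟩, AddSubgroup.mem_sup.2
    ⟨M.dFrom r u, AddSubgroup.mem_map_of_mem _ ?_, t - φ.f r c, ?_, ?_⟩⟩
  · exact mem_decF_of_le hF (sub_mem (AddSubgroup.mem_inf.1 hx₀).1 (hF r (by omega) hcF)) hdx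
      (by omega) (by omega)
  · refine mem_decF_of_le (b := p + r + 3) hF hdx ?_ (by omega) (by omega)
    rw [L.dd]; exact zero_mem _
  · exact mem_decF_of_le hF' hu (hsub' _ _ u hu) (by omega) (by omega)
  · refine mem_decF_of_le (b := p + r + 2) hF' (sub_mem ht (hc _ _ c hcF)) ?_
      (by omega) (by omega)
    rw [hdt]
    exact sub_mem (hc _ _ _ hdx) hdy
  · rw [map_sub, ← add_sub_assoc, hut]
    abel

end Decalage

end Cochain

open Cochain in
theorem dec_preserves_filtered_quasi_isomorphisms_general (L M : Cochain) (φ : Cochain.Hom L M)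
    (F : ℤ → ∀ l, AddSubgroup (L.X l)) (F' : ℤ → ∀ l, AddSubgroup (M.X l))
    (hdec : ∀ p l, F (p + 1) l ≤ F p l) (hdec' : ∀ p l, F' (p + 1) l ≤ F' p l)
    (hsub : ∀ p, L.IsSubcomplex (F p)) (hsub' : ∀ p, M.IsSubcomplex (F' p))
    (hc : ∀ p l, ∀ x ∈ F p l, φ.f l x ∈ F' p l)
    (hE1 : ∀ p n, Function.Bijective ((φ.grHom (F p) (F (p + 1)) (F' p) (F' (p + 1))
      (hsub p) (hsub (p + 1)) (hsub' p) (hsub' (p + 1)) (fun l => hdec p l)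
      (fun l => hdec' p l) (hc p) (hc (p + 1))).Hmap n)) :
    ∀ p r, Function.Bijective ((φ.grHom
      (fun l => decF L F p l) (fun l => decF L F (p + 1) l)
      (fun l => decF M F' p l) (fun l => decF M F' (p + 1) l)
      (decF_isSubcomplex L F p) (decF_isSubcomplex L F (p + 1))
      (decF_isSubcomplex M F' p) (decF_isSubcomplex M F' (p + 1))
      (fun l => decF_mono L F hdec p l) (fun l => decF_mono M F' hdec' p l)
      (decF_compat φ F F' hc p) (decF_compat φ F F' hc (p + 1))).Hmap r) := by
  intro p r
  have hF : ∀ l, Antitone fun p => F p l := fun l => antitone_int_of_succ_le fun p => hdec p l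
  have hF' : ∀ l, Antitone fun p => F' p l := fun l => antitone_int_of_succ_le fun p => hdec' p l
  have hinj : ∀ q n, φ.GrInjective (F q) (F (q + 1)) (F' q) (F' (q + 1)) n := fun q n =>
    (φ.injective_Hmap_grHom_iff ..).1 (hE1 q n).1
  have hsurj : ∀ q n, φ.GrSurjective (F q) (F (q + 1)) (F' q) (F' (q + 1)) n := fun q n =>
    (φ.surjective_Hmap_grHom_iff ..).1 (hE1 q n).2
  exact ⟨(φ.injective_Hmap_grHom_iff ..).2 (φ.grInjective_decF hF hF' hsub hinj hsurj p r),
    (φ.surjective_Hmap_grHom_iff ..).2 (φ.grSurjective_decF hF hF' hsub' hc hinj hsurj p r)⟩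

open Cochain in
/-- Décalage is functorial and preserves filtered quasi-isomorphisms:
if a filtered map `φ : (L, F) → (M, F)` of finitely filtered cochain complexes induces
isomorphisms on all `E_1`-terms `E_1^{p,q} = H^{p+q}(Gr^p_F)`, then it induces isomorphisms
on all `H^r(Gr^p_{Dec(F)})`. -/
theorem dec_preserves_filtered_quasi_isomorphisms (L M : Cochain) (φ : Cochain.Hom L M)
    (F : ℤ → ∀ l, AddSubgroup (L.X l)) (F' : ℤ → ∀ l, AddSubgroup (M.X l))
    (hdec : ∀ p l, F (p + 1) l ≤ F p l) (hdec' : ∀ p l, F' (p + 1) l ≤ F' p l)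
    (hsub : ∀ p, L.IsSubcomplex (F p)) (hsub' : ∀ p, M.IsSubcomplex (F' p))
    (hfin : ∃ a b : ℤ, (∀ l, F a l = ⊤) ∧ (∀ l, F b l = ⊥))
    (hfin' : ∃ a b : ℤ, (∀ l, F' a l = ⊤) ∧ (∀ l, F' b l = ⊥))
    (hc : ∀ p l, ∀ x ∈ F p l, φ.f l x ∈ F' p l)
    (hE1 : ∀ p n, Function.Bijective ((φ.grHom (F p) (F (p + 1)) (F' p) (F' (p + 1))
      (hsub p) (hsub (p + 1)) (hsub' p) (hsub' (p + 1)) (fun l => hdec p l)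
      (fun l => hdec' p l) (hc p) (hc (p + 1))).Hmap n)) :
    ∀ p r, Function.Bijective ((φ.grHom
      (fun l => decF L F p l) (fun l => decF L F (p + 1) l)
      (fun l => decF M F' p l) (fun l => decF M F' (p + 1) l)
      (decF_isSubcomplex L F p) (decF_isSubcomplex L F (p + 1))
      (decF_isSubcomplex M F' p) (decF_isSubcomplex M F' (p + 1))
      (fun l => decF_mono L F hdec p l) (fun l => decF_mono M F' hdec' p l)
      (decF_compat φ F F' hc p) (decF_compat φ F F' hc (p + 1))).Hmap r) :=
  dec_preserves_filtered_quasi_isomorphisms_general L M φ F F' hdec hdec' hsub hsub' hc hE1
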